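/- arXiv:1112.1998 — 2 statements merged into one kernel-verified Lean document; each statement's English description precedes it below -/
import Mathlib

section
/- Let b ∈ L²(Ω;ℝⁿ) satisfy |b(x)| ≤ a(x) for a.e. x ∈ Ω, and let m : Ω → [0,∞) be a measurable function such that m(x) = 0 for a.e. x with |b(x)| < a(x) and such that the pointwise product m·b belongs to L²(Ω;ℝⁿ). Then p := −g + m·b is a subgradient of F* at b; that is, for every d ∈ L²(Ω;ℝⁿ) with |d(x)| ≤ a(x) a.e., one has −⟨g,d⟩ + ⟨g,b⟩ ≥ ⟨p, d − b⟩. -/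
/-!
On the ball `{|v| ≤ a}` the vector `b` with `|b| = a` has outward normal cone `{m b : m ≥ 0}`, so
`⟨m b, d - b⟩ ≤ 0` pointwise for every admissible `d`; where `|b| < a` the multiplier vanishes.
Integrating this and expanding `⟨-g + m b, d - b⟩` by linearity gives the subgradient inequality.
-/

open MeasureTheory RealInnerProductSpace

section Pointwise

variable {E : Type*} [NormedAddCommGroup E] [InnerProductSpace ℝ E]

theorem inner_sub_nonpos_of_norm_le {b d : E} (h : ‖d‖ ≤ ‖b‖) : ⟪b, d - b⟫ ≤ 0 := by
  rw [inner_sub_right, real_inner_self_eq_norm_mul_norm, sub_nonpos]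
  calc ⟪b, d⟫ ≤ ‖b‖ * ‖d‖ := real_inner_le_norm b d
    _ ≤ ‖b‖ * ‖b‖ := mul_le_mul_of_nonneg_left h (norm_nonneg b)

theorem inner_smul_sub_nonpos_of_norm_le {b d : E} {m a : ℝ} (hm : 0 ≤ m)
    (hb : ‖b‖ ≤ a) (hd : ‖d‖ ≤ a) (hm_zero : ‖b‖ < a → m = 0) :
    ⟪m • b, d - b⟫ ≤ 0 := by
  rcases hb.lt_or_eq with hlt | heq
  · simp [hm_zero hlt]
  · rw [real_inner_smul_left]
    exact mul_nonpos_of_nonneg_of_nonpos hm (inner_sub_nonpos_of_norm_le (heq ▸ hd))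

end Pointwise

section Integral

variable {α E : Type*} [MeasurableSpace α] {μ : Measure α}
  [NormedAddCommGroup E] [InnerProductSpace ℝ E]

theorem MeasureTheory.MemLp.integrable_inner {f g : α → E} (hf : MemLp f 2 μ)
    (hg : MemLp g 2 μ) :
    Integrable (fun x => ⟪f x, g x⟫) μ := by
  refine (L2.integrable_inner (𝕜 := ℝ) (hf.toLp f) (hg.toLp g)).congr ?_
  filter_upwards [hf.coeFn_toLp, hg.coeFn_toLp] with x hfx hgx
  rw [hfx, hgx]

theorem integral_inner_neg_add_sub_le {g u b d : α → E} (hg : MemLp g 2 μ) (hu : MemLp u 2 μ)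
    (hb : MemLp b 2 μ) (hd : MemLp d 2 μ) (hu_normal : ∀ᵐ x ∂μ, ⟪u x, d x - b x⟫ ≤ 0) :
    ∫ x, ⟪-g x + u x, d x - b x⟫ ∂μ ≤ -(∫ x, ⟪g x, d x⟫ ∂μ) + ∫ x, ⟪g x, b x⟫ ∂μ := by
  have hgd : Integrable (fun x => ⟪g x, d x⟫) μ := hg.integrable_inner hd
  have hgb : Integrable (fun x => ⟪g x, b x⟫) μ := hg.integrable_inner hb
  have hg_int : Integrable (fun x => ⟪g x, b x⟫ - ⟪g x, d x⟫) μ := hgb.sub hgd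
  have hu_int : Integrable (fun x => ⟪u x, d x - b x⟫) μ := hu.integrable_inner (hd.sub hb)
  have hexpand : (fun x => ⟪-g x + u x, d x - b x⟫) =
      fun x => ⟪u x, d x - b x⟫ + (⟪g x, b x⟫ - ⟪g x, d x⟫) := by
    funext x
    rw [inner_add_left, inner_neg_left, inner_sub_right]
    ring
  rw [hexpand, integral_add hu_int hg_int, integral_sub hgb hgd]
  linarith [integral_nonpos_of_ae hu_normal]

end Integral

theorem stmt_2_general {n : ℕ}
    (μ : Measure (EuclideanSpace ℝ (Fin n)))
    (a : EuclideanSpace ℝ (Fin n) → ℝ)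
    (g : EuclideanSpace ℝ (Fin n) → EuclideanSpace ℝ (Fin n)) (hg : MemLp g 2 μ)
    (b : EuclideanSpace ℝ (Fin n) → EuclideanSpace ℝ (Fin n)) (hb : MemLp b 2 μ)
    (hba : ∀ᵐ x ∂μ, ‖b x‖ ≤ a x)
    (m : EuclideanSpace ℝ (Fin n) → ℝ) (hm0 : ∀ x, 0 ≤ m x)
    (hmb : ∀ᵐ x ∂μ, ‖b x‖ < a x → m x = 0)
    (hmbL2 : MemLp (fun x => m x • b x) 2 μ)
    (p : EuclideanSpace ℝ (Fin n) → EuclideanSpace ℝ (Fin n))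
    (hp : ∀ x, p x = -g x + m x • b x) :
    ∀ d : EuclideanSpace ℝ (Fin n) → EuclideanSpace ℝ (Fin n),
      MemLp d 2 μ → (∀ᵐ x ∂μ, ‖d x‖ ≤ a x) →
      (∫ x, ⟪p x, d x - b x⟫ ∂μ) ≤
        -(∫ x, ⟪g x, d x⟫ ∂μ) + ∫ x, ⟪g x, b x⟫ ∂μ := by
  intro d hd hda
  simp only [hp]
  refine integral_inner_neg_add_sub_le hg hmbL2 hb hd ?_
  filter_upwards [hba, hda, hmb] with x hbx hdx hmx
  exact inner_smul_sub_nonpos_of_norm_le (hm0 x) hbx hdx hmx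

/-- If `|b(x)| ≤ a(x)` a.e. and `m : Ω → [0,∞)` is measurable with
`m(x) = 0` a.e. on `{|b| < a}` and `m·b ∈ L²(Ω;ℝⁿ)`, then `p := -g + m·b` is a
subgradient of `F*` at `b`: for every `d ∈ L²(Ω;ℝⁿ)` with `|d(x)| ≤ a(x)` a.e.,
`-⟨g,d⟩ + ⟨g,b⟩ ≥ ⟨p, d - b⟩`. -/
theorem stmt_2 {n : ℕ} (hn : 2 ≤ n) (Ω : Set (EuclideanSpace ℝ (Fin n)))
    (hΩopen : IsOpen Ω) (hΩbdd : Bornology.IsBounded Ω)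
    (μ : Measure (EuclideanSpace ℝ (Fin n))) (hμ : μ = volume.restrict Ω)
    (a : EuclideanSpace ℝ (Fin n) → ℝ) (ha2 : MemLp a 2 μ) (ha0 : ∀ᵐ x ∂μ, 0 ≤ a x)
    (g : EuclideanSpace ℝ (Fin n) → EuclideanSpace ℝ (Fin n)) (hg : MemLp g 2 μ)
    (b : EuclideanSpace ℝ (Fin n) → EuclideanSpace ℝ (Fin n)) (hb : MemLp b 2 μ)
    (hba : ∀ᵐ x ∂μ, ‖b x‖ ≤ a x)
    (m : EuclideanSpace ℝ (Fin n) → ℝ) (hm : Measurable m) (hm0 : ∀ x, 0 ≤ m x)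
    (hmb : ∀ᵐ x ∂μ, ‖b x‖ < a x → m x = 0)
    (hmbL2 : MemLp (fun x => m x • b x) 2 μ)
    (p : EuclideanSpace ℝ (Fin n) → EuclideanSpace ℝ (Fin n))
    (hp : ∀ x, p x = -g x + m x • b x) :
    ∀ d : EuclideanSpace ℝ (Fin n) → EuclideanSpace ℝ (Fin n),
      MemLp d 2 μ → (∀ᵐ x ∂μ, ‖d x‖ ≤ a x) →
      (∫ x, ⟪p x, d x - b x⟫ ∂μ) ≤
        -(∫ x, ⟪g x, d x⟫ ∂μ) + ∫ x, ⟪g x, b x⟫ ∂μ :=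
  stmt_2_general μ a g hg b hb hba m hm0 hmb hmbL2 p hp
end

section
/- Let H be a real Hilbert space, λ > 0, and let A, B : H → Set(H) be maximal monotone set-valued operators with resolvents J_{λA}, J_{λB} : H → H (so x − J_{λA}(x) ∈ λ·A(J_{λA}(x)) and x − J_{λB}(x) ∈ λ·B(J_{λB}(x)) for all x). Assume there exists z ∈ H with 0 ∈ A(z) + B(z). Let (α_k) and (β_k) be sequences in H with ∑_{k}(‖α_k‖ + ‖β_k‖) < ∞. Given x₀ ∈ H, define for k ≥ 0: x_{k+1} = x_k + J_{λA}(2(J_{λB}(x_k) + β_k) − x_k) + α_k − (J_{λB}(x_k) + β_k). Then there exist x̂, p̂ ∈ H such that x_k converges weakly to x̂ and p_k := J_{λB}(x_k) converges weakly to p̂; moreover p̂ = J_{λB}(x̂) and 0 ∈ A(p̂) + B(p̂). -/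
/-!
The Douglas–Rachford operator `T u = u + J_{λA} (2 J_{λB} u - u) - J_{λB} u` is the average of
the identity and the composition of the reflections `2 J - id`, hence firmly nonexpansive, and
`z - λ w` is a fixed point of `T` whenever `w ∈ A z`, `-w ∈ B z`. The iteration reads
`x (k + 1) = T (x k) + e k` with `∑ ‖e k‖ < ∞`, so `‖x k - y‖` converges for every fixed point
`y` and `x (k + 1) - x k → 0`.

Weak cluster points are taken along ultrafilters, where bounded sequences converge weakly by
Banach–Alaoglu. Along such an ultrafilter let `p k = J_{λB} (x k) ⇀ p̂` and `x k ⇀ x̂`. The pairs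
`(p k, b k) ∈ gr B` and `(q k, a k) ∈ gr A` produced by the two resolvents satisfy
`q k - p k → 0` and `a k + b k → 0` strongly, so the sum of the two monotonicity inequalities
passes to the weak limit with `b̂ = (x̂ - p̂) / λ`. Testing the limit inequality at the
resolvent points `J_{λB} (p̂ + λ b̂)`, `J_{λA} (p̂ - λ b̂)` gives `b̂ ∈ B p̂` and `-b̂ ∈ A p̂`;
hence `x̂` is a fixed point of `T` and `p̂ = J_{λB} x̂`. Opial's argument makes the cluster
point `x̂` unique, and then so is `p̂`.
-/

open RealInnerProductSpace Filter Topology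

def IsMonotoneOp {H : Type*} [NormedAddCommGroup H] [InnerProductSpace ℝ H]
    (A : H → Set H) : Prop :=
  ∀ x₁ x₂ y₁ y₂ : H, y₁ ∈ A x₁ → y₂ ∈ A x₂ → 0 ≤ ⟪x₁ - x₂, y₁ - y₂⟫

/-- Maximality is encoded as: any pair `(x, y)` monotonically related to the graph of `A`
belongs to the graph of `A`. -/
def IsMaximalMonotoneOp {H : Type*} [NormedAddCommGroup H] [InnerProductSpace ℝ H]
    (A : H → Set H) : Prop :=
  IsMonotoneOp A ∧
    ∀ x y : H, (∀ x' y' : H, y' ∈ A x' → 0 ≤ ⟪x - x', y - y'⟫) → y ∈ A x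

open Function

section WeakConvergence

variable {H ι : Type*} [NormedAddCommGroup H] [InnerProductSpace ℝ H]

def WeakTendsto (u : ι → H) (l : Filter ι) (a : H) : Prop :=
  ∀ w, Tendsto (fun k => ⟪u k, w⟫) l (𝓝 ⟪a, w⟫)

namespace WeakTendsto

variable {u v : ι → H} {l l' : Filter ι} {a b : H}

theorem mono (h : WeakTendsto u l a) (hl : l' ≤ l) : WeakTendsto u l' a :=
  fun w => (h w).mono_left hl

theorem sub (hu : WeakTendsto u l a) (hv : WeakTendsto v l b) :
    WeakTendsto (fun k => u k - v k) l (a - b) :=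
  fun w => by simpa only [inner_sub_left] using (hu w).sub (hv w)

theorem const_smul (h : WeakTendsto u l a) (c : ℝ) :
    WeakTendsto (fun k => c • u k) l (c • a) :=
  fun w => by simpa only [real_inner_smul_left] using (h w).const_mul c

end WeakTendsto

theorem weakTendsto_iff_ultrafilter {u : ι → H} {l : Filter ι} {a : H} :
    WeakTendsto u l a ↔ ∀ V : Ultrafilter ι, ↑V ≤ l → WeakTendsto u V a := by
  simp only [WeakTendsto, tendsto_iff_ultrafilter _ l]
  exact ⟨fun h V hV w => h w V hV, fun h w V hV => h V hV w⟩

/-- Banach–Alaoglu, transported to `H` by the Riesz representation. -/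
theorem exists_weakTendsto_of_norm_le [CompleteSpace H] {u : ι → H} {C : ℝ}
    (hu : ∀ k, ‖u k‖ ≤ C) (V : Ultrafilter ι) : ∃ a, WeakTendsto u V a := by
  let g : ι → WeakDual ℝ H := fun k => StrongDual.toWeakDual (InnerProductSpace.toDual ℝ H (u k))
  have hg : ↑(V.map g) ≤
      𝓟 (WeakDual.toStrongDual ⁻¹' Metric.closedBall (0 : StrongDual ℝ H) C) := by
    rw [Ultrafilter.coe_map, le_principal_iff, mem_map]
    exact univ_mem' fun k => by simpa [g] using hu k
  obtain ⟨φ, -, hφ⟩ :=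
    (WeakDual.isCompact_closedBall (0 : StrongDual ℝ H) C).ultrafilter_le_nhds _ hg
  refine ⟨(InnerProductSpace.toDual ℝ H).symm (WeakDual.toStrongDual φ), fun w => ?_⟩
  simpa [g, Function.comp_def] using ((WeakDual.eval_continuous w).tendsto φ).comp hφ

theorem eq_of_weakTendsto_of_tendsto_norm_sub {x : ι → H} {l V V' : Filter ι} [V.NeBot]
    [V'.NeBot] (hV : V ≤ l) (hV' : V' ≤ l) {a b : H} {ra rb : ℝ} (ha : WeakTendsto x V a)
    (hb : WeakTendsto x V' b) (hra : Tendsto (fun k => ‖x k - a‖) l (𝓝 ra))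
    (hrb : Tendsto (fun k => ‖x k - b‖) l (𝓝 rb)) : a = b := by
  have hpolar : ∀ k, ⟪x k, a - b⟫ = (‖x k - b‖ ^ 2 - ‖x k - a‖ ^ 2 + ‖a‖ ^ 2 - ‖b‖ ^ 2) / 2 := by
    intro k
    rw [norm_sub_sq_real, norm_sub_sq_real, inner_sub_right]
    ring
  have hlim : Tendsto (fun k => ⟪x k, a - b⟫) l
      (𝓝 ((rb ^ 2 - ra ^ 2 + ‖a‖ ^ 2 - ‖b‖ ^ 2) / 2)) := by
    simp_rw [hpolar]
    exact ((((hrb.pow 2).sub (hra.pow 2)).add_const _).sub_const _).div_const 2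
  have h1 := tendsto_nhds_unique (ha (a - b)) (hlim.mono_left hV)
  have h2 := tendsto_nhds_unique (hb (a - b)) (hlim.mono_left hV')
  rw [← sub_eq_zero, ← real_inner_self_nonpos, inner_sub_left, h1, h2, sub_self]

/-- Opial's lemma. -/
theorem exists_weakTendsto_of_opial [CompleteSpace H] {S : Set H} {x : ι → H} {l : Filter ι}
    [l.NeBot] {C : ℝ} (hC : ∀ k, ‖x k‖ ≤ C)
    (hdist : ∀ y ∈ S, ∃ r, Tendsto (fun k => ‖x k - y‖) l (𝓝 r))
    (hS : ∀ V : Ultrafilter ι, ↑V ≤ l → ∀ a, WeakTendsto x V a → a ∈ S) :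
    ∃ a ∈ S, WeakTendsto x l a := by
  obtain ⟨a, ha⟩ := exists_weakTendsto_of_norm_le hC (Ultrafilter.of l)
  have haS := hS _ (Ultrafilter.of_le l) a ha
  refine ⟨a, haS, weakTendsto_iff_ultrafilter.2 fun V hV => ?_⟩
  obtain ⟨b, hb⟩ := exists_weakTendsto_of_norm_le hC V
  obtain ⟨ra, hra⟩ := hdist a haS
  obtain ⟨rb, hrb⟩ := hdist b (hS V hV b hb)
  rwa [eq_of_weakTendsto_of_tendsto_norm_sub (Ultrafilter.of_le l) hV ha hb hra hrb]

end WeakConvergence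

section Nonexpansive

variable {H : Type*} [NormedAddCommGroup H] [InnerProductSpace ℝ H]

def FirmlyNonexpansive (F : H → H) : Prop :=
  ∀ u v, ‖F u - F v‖ ^ 2 ≤ ⟪F u - F v, u - v⟫

namespace FirmlyNonexpansive

variable {F : H → H} (hF : FirmlyNonexpansive F)
include hF

theorem norm_sub_le (u v : H) : ‖F u - F v‖ ≤ ‖u - v‖ := by
  have := (hF u v).trans (real_inner_le_norm _ _)
  nlinarith [norm_nonneg (F u - F v), norm_nonneg (u - v)]

theorem norm_reflection_sub_le (u v : H) :
    ‖((2 : ℝ) • F u - u) - ((2 : ℝ) • F v - v)‖ ≤ ‖u - v‖ := by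
  rw [← sq_le_sq₀ (norm_nonneg _) (norm_nonneg _)]
  have : ((2 : ℝ) • F u - u) - ((2 : ℝ) • F v - v) = (2 : ℝ) • (F u - F v) - (u - v) := by
    module
  rw [this, norm_sub_sq_real, norm_smul, real_inner_smul_left]
  norm_num
  nlinarith [hF u v]

theorem norm_sub_sq_le {y : H} (hy : IsFixedPt F y) (u : H) :
    ‖u - F u‖ ^ 2 ≤ ‖u - y‖ ^ 2 - ‖F u - y‖ ^ 2 := by
  have h := hF u y
  rw [hy.eq] at h
  have : u - F u = (u - y) - (F u - y) := by abel
  rw [this, norm_sub_sq_real, real_inner_comm]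
  linarith

end FirmlyNonexpansive

theorem firmlyNonexpansive_midpoint {R : H → H} (hR : ∀ u v, ‖R u - R v‖ ≤ ‖u - v‖) :
    FirmlyNonexpansive fun u => (2⁻¹ : ℝ) • (u + R u) := by
  intro u v
  have : (2⁻¹ : ℝ) • (u + R u) - (2⁻¹ : ℝ) • (v + R v) = (2⁻¹ : ℝ) • ((u - v) + (R u - R v)) := by
    module
  rw [this, norm_smul, mul_pow, norm_add_sq_real, real_inner_smul_left, inner_add_left,
    real_inner_self_eq_norm_sq, real_inner_comm]
  norm_num
  nlinarith [hR u v, norm_nonneg (R u - R v)]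

end Nonexpansive

section Resolvent

variable {H : Type*} [NormedAddCommGroup H] [InnerProductSpace ℝ H]

def IsResolvent (lam : ℝ) (M : H → Set H) (J : H → H) : Prop :=
  ∀ x, ∃ w ∈ M (J x), x - J x = lam • w

namespace IsResolvent

variable {lam : ℝ} {M : H → Set H} {J : H → H} (hJ : IsResolvent lam M J)
include hJ

theorem inv_smul_mem (hlam : lam ≠ 0) (x : H) : lam⁻¹ • (x - J x) ∈ M (J x) := by
  obtain ⟨w, hw, hx⟩ := hJ x
  rwa [hx, inv_smul_smul₀ hlam]

theorem mem_of_apply_eq (hlam : lam ≠ 0) {p b : H} (h : J (p + lam • b) = p) : b ∈ M p := by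
  simpa [h, hlam] using hJ.inv_smul_mem hlam (p + lam • b)

theorem inner_nonneg (hlam : 0 ≤ lam) (hM : IsMonotoneOp M) (x : H) {p b : H} (hb : b ∈ M p) :
    0 ≤ ⟪J x - p, (x - J x) - lam • b⟫ := by
  obtain ⟨w, hw, hx⟩ := hJ x
  rw [hx, ← smul_sub, real_inner_smul_right]
  exact mul_nonneg hlam (hM _ _ _ _ hw hb)

theorem apply_eq (hlam : 0 ≤ lam) (hM : IsMonotoneOp M) {u p b : H} (hb : b ∈ M p)
    (hu : u - p = lam • b) : J u = p := by
  have h := hJ.inner_nonneg hlam hM u hb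
  rw [← hu, sub_sub_sub_cancel_left, ← neg_sub, inner_neg_left, neg_nonneg,
    real_inner_self_nonpos] at h
  exact (sub_eq_zero.1 h).symm

theorem firmlyNonexpansive (hlam : 0 ≤ lam) (hM : IsMonotoneOp M) : FirmlyNonexpansive J := by
  intro x y
  obtain ⟨b, hb, hy⟩ := hJ y
  have h := hJ.inner_nonneg hlam hM x hb
  rw [← hy, sub_sub_sub_comm, inner_sub_right, real_inner_self_eq_norm_sq] at h
  linarith

end IsResolvent

end Resolvent

section DouglasRachford

variable {H : Type*} [NormedAddCommGroup H] [InnerProductSpace ℝ H]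

def douglasRachford (JA JB : H → H) (u : H) : H :=
  u + JA ((2 : ℝ) • JB u - u) - JB u

theorem douglasRachford_eq_midpoint (JA JB : H → H) :
    douglasRachford JA JB = fun u =>
      (2⁻¹ : ℝ) • (u + ((2 : ℝ) • JA ((2 : ℝ) • JB u - u) - ((2 : ℝ) • JB u - u))) := by
  funext u
  simp only [douglasRachford]
  module

theorem FirmlyNonexpansive.douglasRachford {JA JB : H → H} (hA : FirmlyNonexpansive JA)
    (hB : FirmlyNonexpansive JB) : FirmlyNonexpansive (douglasRachford JA JB) := by
  rw [douglasRachford_eq_midpoint]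
  exact firmlyNonexpansive_midpoint fun u v =>
    (hA.norm_reflection_sub_le _ _).trans (hB.norm_reflection_sub_le u v)

theorem norm_sub_douglasRachford_le {JA : H → H} (hA : FirmlyNonexpansive JA) (JB : H → H)
    (x a b : H) :
    ‖(x + JA ((2 : ℝ) • (JB x + b) - x) + a - (JB x + b)) - douglasRachford JA JB x‖ ≤
      ‖a‖ + 3 * ‖b‖ := by
  have hsplit : (x + JA ((2 : ℝ) • (JB x + b) - x) + a - (JB x + b)) - douglasRachford JA JB x =
      (JA ((2 : ℝ) • (JB x + b) - x) - JA ((2 : ℝ) • JB x - x)) + (a - b) := by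
    simp only [douglasRachford]
    abel
  have hJ := hA.norm_sub_le ((2 : ℝ) • (JB x + b) - x) ((2 : ℝ) • JB x - x)
  rw [show ((2 : ℝ) • (JB x + b) - x) - ((2 : ℝ) • JB x - x) = (2 : ℝ) • b by module,
    norm_smul, Real.norm_two] at hJ
  rw [hsplit]
  linarith [norm_add_le (JA ((2 : ℝ) • (JB x + b) - x) - JA ((2 : ℝ) • JB x - x)) (a - b),
    norm_sub_le a b]

variable {lam : ℝ} {A B : H → Set H} {JA JB : H → H}

theorem isFixedPt_douglasRachford (hlam : 0 ≤ lam) (hA : IsMonotoneOp A) (hB : IsMonotoneOp B)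
    (hJA : IsResolvent lam A JA) (hJB : IsResolvent lam B JB) {z w : H} (hwA : w ∈ A z)
    (hwB : -w ∈ B z) :
    JB (z - lam • w) = z ∧ IsFixedPt (douglasRachford JA JB) (z - lam • w) := by
  have hzB : JB (z - lam • w) = z := hJB.apply_eq hlam hB hwB (by rw [smul_neg]; abel)
  have hzA : JA ((2 : ℝ) • z - (z - lam • w)) = z := hJA.apply_eq hlam hA hwA (by module)
  refine ⟨hzB, ?_⟩
  simp only [IsFixedPt, douglasRachford, hzB, hzA]
  abel

end DouglasRachford

section QuasiFejer

theorem exists_tendsto_of_le_add_of_summable {d ε : ℕ → ℝ} (hd : ∀ k, 0 ≤ d k)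
    (hε : Summable ε) (hrec : ∀ k, d (k + 1) ≤ d k + ε k) : ∃ r, Tendsto d atTop (𝓝 r) := by
  set s : ℕ → ℝ := fun k => ∑ i ∈ Finset.range k, ε i
  have hs : Tendsto s atTop (𝓝 (∑' i, ε i)) := hε.hasSum.tendsto_sum_nat
  have hanti : Antitone fun k => d k - s k := antitone_nat_of_succ_le fun k => by
    simp only [s, Finset.sum_range_succ]
    linarith [hrec k]
  obtain ⟨M, hM⟩ := hs.bddAbove_range
  have hbdd : BddBelow (Set.range fun k => d k - s k) := by
    refine ⟨-M, ?_⟩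
    rintro _ ⟨k, rfl⟩
    linarith [hd k, hM ⟨k, rfl⟩]
  exact ⟨_, by simpa using (tendsto_atTop_ciInf hanti hbdd).add hs⟩

variable {E : Type*} [NormedAddCommGroup E] {F : E → E} {x : ℕ → E} {ε : ℕ → ℝ} {y : E}

theorem exists_tendsto_norm_sub_of_isFixedPt (hF : ∀ u v, ‖F u - F v‖ ≤ ‖u - v‖)
    (hx : ∀ k, ‖x (k + 1) - F (x k)‖ ≤ ε k) (hε : Summable ε) (hy : IsFixedPt F y) :
    ∃ r, Tendsto (fun k => ‖x k - y‖) atTop (𝓝 r) :=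
  exists_tendsto_of_le_add_of_summable (fun _ => norm_nonneg _) hε fun k => by
    have hFy := hF (x k) y
    rw [hy.eq] at hFy
    linarith [hx k, norm_sub_le_norm_sub_add_norm_sub (x (k + 1)) (F (x k)) y]

theorem exists_norm_le_of_isFixedPt (hF : ∀ u v, ‖F u - F v‖ ≤ ‖u - v‖)
    (hx : ∀ k, ‖x (k + 1) - F (x k)‖ ≤ ε k) (hε : Summable ε) (hy : IsFixedPt F y) :
    ∃ C, ∀ k, ‖x k‖ ≤ C := by
  obtain ⟨r, hr⟩ := exists_tendsto_norm_sub_of_isFixedPt hF hx hε hy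
  obtain ⟨M, hM⟩ := hr.bddAbove_range
  exact ⟨M + ‖y‖, fun k => by linarith [norm_le_norm_add_norm_sub' (x k) y, hM ⟨k, rfl⟩]⟩

end QuasiFejer

section InexactIteration

variable {H : Type*} [NormedAddCommGroup H] [InnerProductSpace ℝ H] {F : H → H} {x : ℕ → H}
  {ε : ℕ → ℝ} {y : H}

theorem tendsto_norm_succ_sub (hF : FirmlyNonexpansive F)
    (hx : ∀ k, ‖x (k + 1) - F (x k)‖ ≤ ε k) (hε : Summable ε) (hy : IsFixedPt F y) :
    Tendsto (fun k => ‖x (k + 1) - x k‖) atTop (𝓝 0) := by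
  obtain ⟨r, hr⟩ := exists_tendsto_norm_sub_of_isFixedPt hF.norm_sub_le hx hε hy
  have hres : ∀ k, ‖x k - F (x k)‖ ≤
      √(‖x k - y‖ ^ 2 - ‖x (k + 1) - y‖ ^ 2 + ε k * (ε k + 2 * ‖x k - y‖)) := fun k => by
    have hfirm := hF.norm_sub_sq_le hy (x k)
    have hFy := hF.norm_sub_le (x k) y
    rw [hy.eq] at hFy
    have hstep : ‖x (k + 1) - y‖ ≤ ε k + ‖F (x k) - y‖ :=
      (norm_sub_le_norm_sub_add_norm_sub _ (F (x k)) _).trans (by linarith [hx k])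
    have hε0 : 0 ≤ ε k := (norm_nonneg _).trans (hx k)
    rw [← Real.sqrt_sq (norm_nonneg (x k - F (x k)))]
    refine Real.sqrt_le_sqrt ?_
    nlinarith [pow_le_pow_left₀ (norm_nonneg _) hstep 2, mul_le_mul_of_nonneg_left hFy hε0]
  have hr1 := hr.comp (tendsto_add_atTop_nat 1)
  have hlim : Tendsto (fun k => ‖x k - y‖ ^ 2 - ‖x (k + 1) - y‖ ^ 2 +
      ε k * (ε k + 2 * ‖x k - y‖)) atTop (𝓝 0) := by
    simpa using ((hr.pow 2).sub (hr1.pow 2)).add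
      (hε.tendsto_atTop_zero.mul (hε.tendsto_atTop_zero.add (hr.const_mul 2)))
  refine squeeze_zero (fun _ => norm_nonneg _) (fun k => ?_)
    (by simpa using hε.tendsto_atTop_zero.add hlim.sqrt)
  have := norm_sub_le_norm_sub_add_norm_sub (x (k + 1)) (F (x k)) (x k)
  rw [norm_sub_rev (F (x k))] at this
  linarith [hx k, hres k]

end InexactIteration

section Cluster

variable {H ι : Type*} [NormedAddCommGroup H] [InnerProductSpace ℝ H] {lam : ℝ}
  {A B : H → Set H} {JA JB : H → H}

theorem mem_of_forall_inner_add_inner_nonneg (hlam : 0 < lam) (hJA : IsResolvent lam A JA)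
    (hJB : IsResolvent lam B JB) {p b : H}
    (h : ∀ u v u' v', v ∈ B u → v' ∈ A u' → 0 ≤ ⟪p - u, b - v⟫ + ⟪p - u', -b - v'⟫) :
    b ∈ B p ∧ -b ∈ A p := by
  set u := JB (p + lam • b)
  set u' := JA (p + lam • -b)
  have key := h u _ u' _ (hJB.inv_smul_mem hlam.ne' _) (hJA.inv_smul_mem hlam.ne' _)
  have hsq : ∀ c w : H, ⟪p - w, c - lam⁻¹ • ((p + lam • c) - w)⟫ = -(lam⁻¹ * ⟪p - w, p - w⟫) := by
    intro c w
    rw [show c - lam⁻¹ • ((p + lam • c) - w) = -(lam⁻¹ • (p - w)) by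
        rw [smul_sub, smul_add, inv_smul_smul₀ hlam.ne', smul_sub]; abel,
      inner_neg_right, real_inner_smul_right]
  rw [hsq, hsq] at key
  have hpos := inv_pos.2 hlam
  have hu : ⟪p - u, p - u⟫ ≤ 0 := by
    nlinarith [real_inner_self_nonneg (x := p - u), real_inner_self_nonneg (x := p - u')]
  have hu' : ⟪p - u', p - u'⟫ ≤ 0 := by
    nlinarith [real_inner_self_nonneg (x := p - u), real_inner_self_nonneg (x := p - u')]
  rw [real_inner_self_nonpos, sub_eq_zero] at hu hu'
  exact ⟨hJB.mem_of_apply_eq hlam.ne' hu.symm, hJA.mem_of_apply_eq hlam.ne' hu'.symm⟩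

/-- The sum of the monotonicity inequalities of `A` at `(q k, a k)` and of `B` at `(p k, b k)`
differs from an expression affine in `(p k, b k)` by terms that vanish in norm, so it passes to
the weak limit. -/
theorem inner_add_inner_nonneg_of_weakTendsto {l : Filter ι} [l.NeBot] (hA : IsMonotoneOp A)
    (hB : IsMonotoneOp B) {p q a b : ι → H} {p' b' : H} {Cp Cb : ℝ}
    (hb : ∀ k, b k ∈ B (p k)) (ha : ∀ k, a k ∈ A (q k)) (hpw : WeakTendsto p l p')
    (hbw : WeakTendsto b l b') (hpC : ∀ k, ‖p k‖ ≤ Cp) (hbC : ∀ k, ‖b k‖ ≤ Cb)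
    (hqp : Tendsto (fun k => ‖q k - p k‖) l (𝓝 0)) (hab : Tendsto (fun k => ‖a k + b k‖) l (𝓝 0))
    {u v u' v' : H} (hv : v ∈ B u) (hv' : v' ∈ A u') :
    0 ≤ ⟪p' - u, b' - v⟫ + ⟪p' - u', -b' - v'⟫ := by
  have haff : ∀ p b : H, ⟪p - u, b - v⟫ + ⟪p - u', -b - v'⟫ =
      ⟪p, -(v + v')⟫ + ⟪b, u' - u⟫ + (⟪u, v⟫ + ⟪u', v'⟫) := fun p b => by
    simp only [inner_sub_left, inner_sub_right, inner_neg_right, inner_add_right,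
      real_inner_comm u, real_inner_comm u']
    ring
  have hsplit : ∀ k, ⟪p k - u, b k - v⟫ + ⟪q k - u', a k - v'⟫ =
      (⟪p k - u, b k - v⟫ + ⟪p k - u', -b k - v'⟫) +
        (⟪q k - p k, (a k + b k) - (b k + v')⟫ + ⟪p k - u', a k + b k⟫) := fun k => by
    simp only [inner_sub_left, inner_sub_right, inner_neg_right, inner_add_right]
    ring
  have hbound : ∀ k, ‖⟪q k - p k, (a k + b k) - (b k + v')⟫ + ⟪p k - u', a k + b k⟫‖ ≤
      ‖q k - p k‖ * (‖a k + b k‖ + (Cb + ‖v'‖)) + (Cp + ‖u'‖) * ‖a k + b k‖ := fun k => by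
    refine (norm_add_le _ _).trans (add_le_add ?_ ?_) <;>
      refine (norm_inner_le_norm _ _).trans ?_
    · refine mul_le_mul_of_nonneg_left ((norm_sub_le _ _).trans ?_) (norm_nonneg _)
      linarith [norm_add_le (b k) v', hbC k]
    · refine mul_le_mul_of_nonneg_right ((norm_sub_le _ _).trans ?_) (norm_nonneg _)
      linarith [hpC k]
  have hrem := squeeze_zero_norm hbound (by
    simpa using (hqp.mul (hab.add_const (Cb + ‖v'‖))).add (hab.const_mul (Cp + ‖u'‖)))
  have hlim := (((hpw (-(v + v'))).add (hbw (u' - u))).add_const (⟪u, v⟫ + ⟪u', v'⟫)).add hrem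
  simp only [← haff, add_zero] at hlim
  exact ge_of_tendsto hlim (Eventually.of_forall fun k => hsplit k ▸
    add_nonneg (hB _ _ _ _ (hb k) hv) (hA _ _ _ _ (ha k) hv'))

end Cluster

section DouglasRachfordIteration

variable {H : Type*} [NormedAddCommGroup H] [InnerProductSpace ℝ H] {lam : ℝ}
  {A B : H → Set H} {JA JB : H → H} {α β x : ℕ → H}

theorem tendsto_douglasRachford_residuals
    (hxrec : ∀ k, x (k + 1) = x k + JA ((2 : ℝ) • (JB (x k) + β k) - x k) + α k - (JB (x k) + β k))
    (hαβ : Tendsto (fun k => ‖α k‖ + ‖β k‖) atTop (𝓝 0))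
    (hstep : Tendsto (fun k => ‖x (k + 1) - x k‖) atTop (𝓝 0)) :
    Tendsto (fun k => ‖JA ((2 : ℝ) • (JB (x k) + β k) - x k) - JB (x k)‖) atTop (𝓝 0) ∧
      Tendsto (fun k => ‖lam⁻¹ • ((2 : ℝ) • (JB (x k) + β k) - x k -
        JA ((2 : ℝ) • (JB (x k) + β k) - x k)) + lam⁻¹ • (x k - JB (x k))‖) atTop (𝓝 0) := by
  set q := fun k => JA ((2 : ℝ) • (JB (x k) + β k) - x k)
  have hqp : ∀ k, ‖q k - JB (x k)‖ ≤ ‖x (k + 1) - x k‖ + (‖α k‖ + ‖β k‖) := fun k => by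
    rw [show q k - JB (x k) = (x (k + 1) - x k) - (α k - β k) by rw [hxrec k]; abel]
    linarith [norm_sub_le (x (k + 1) - x k) (α k - β k), norm_sub_le (α k) (β k)]
  have hqp0 : Tendsto (fun k => ‖q k - JB (x k)‖) atTop (𝓝 0) :=
    squeeze_zero (fun _ => norm_nonneg _) hqp (by simpa using hstep.add hαβ)
  have hab : ∀ k, ‖lam⁻¹ • ((2 : ℝ) • (JB (x k) + β k) - x k - q k) + lam⁻¹ • (x k - JB (x k))‖ ≤
      |lam⁻¹| * (‖q k - JB (x k)‖ + 2 * (‖α k‖ + ‖β k‖)) := fun k => by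
    rw [show lam⁻¹ • ((2 : ℝ) • (JB (x k) + β k) - x k - q k) + lam⁻¹ • (x k - JB (x k)) =
        lam⁻¹ • ((2 : ℝ) • β k - (q k - JB (x k))) by module, norm_smul, Real.norm_eq_abs]
    refine mul_le_mul_of_nonneg_left ((norm_sub_le _ _).trans ?_) (abs_nonneg _)
    rw [norm_smul, Real.norm_two]
    linarith [norm_nonneg (α k)]
  exact ⟨hqp0, squeeze_zero (fun _ => norm_nonneg _) hab
    (by simpa using (hqp0.add (hαβ.const_mul 2)).const_mul |lam⁻¹|)⟩

theorem douglasRachford_weak_cluster [CompleteSpace H] (hlam : 0 < lam) (hA : IsMonotoneOp A)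
    (hB : IsMonotoneOp B) (hJA : IsResolvent lam A JA) (hJB : IsResolvent lam B JB)
    (hxrec : ∀ k, x (k + 1) = x k + JA ((2 : ℝ) • (JB (x k) + β k) - x k) + α k - (JB (x k) + β k))
    (hαβ : Tendsto (fun k => ‖α k‖ + ‖β k‖) atTop (𝓝 0))
    (hstep : Tendsto (fun k => ‖x (k + 1) - x k‖) atTop (𝓝 0)) {C : ℝ} (hC : ∀ k, ‖x k‖ ≤ C)
    (V : Ultrafilter ℕ) (hV : (V : Filter ℕ) ≤ atTop) {xh : H} (hx : WeakTendsto x V xh) :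
    IsFixedPt (douglasRachford JA JB) xh ∧ WeakTendsto (fun k => JB (x k)) V (JB xh) ∧
      ∃ w ∈ A (JB xh), -w ∈ B (JB xh) := by
  have hpC : ∀ k, ‖JB (x k)‖ ≤ C + ‖JB 0‖ := fun k => by
    have := (hJB.firmlyNonexpansive hlam.le hB).norm_sub_le (x k) 0
    rw [sub_zero] at this
    linarith [norm_le_norm_add_norm_sub' (JB (x k)) (JB 0), hC k]
  have hbC : ∀ k, ‖lam⁻¹ • (x k - JB (x k))‖ ≤ |lam⁻¹| * (C + (C + ‖JB 0‖)) := fun k => by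
    rw [norm_smul, Real.norm_eq_abs]
    exact mul_le_mul_of_nonneg_left ((norm_sub_le _ _).trans (add_le_add (hC k) (hpC k)))
      (abs_nonneg _)
  obtain ⟨ph, hp⟩ := exists_weakTendsto_of_norm_le hpC V
  obtain ⟨hqp, hab⟩ := tendsto_douglasRachford_residuals (lam := lam) hxrec hαβ hstep
  obtain ⟨hbB, hbA⟩ := mem_of_forall_inner_add_inner_nonneg hlam hJA hJB fun u v u' v' hv hv' =>
    inner_add_inner_nonneg_of_weakTendsto hA hB (fun k => hJB.inv_smul_mem hlam.ne' (x k))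
      (fun k => hJA.inv_smul_mem hlam.ne' _) hp ((hx.sub hp).const_smul lam⁻¹) hpC hbC
      (hqp.mono_left hV) (hab.mono_left hV) hv hv'
  obtain ⟨hph, hfix⟩ := isFixedPt_douglasRachford hlam.le hA hB hJA hJB hbA
    (by rwa [neg_neg])
  rw [smul_neg, sub_neg_eq_add, smul_inv_smul₀ hlam.ne', add_sub_cancel] at hph hfix
  rw [hph]
  exact ⟨hfix, hp, _, hbA, by rwa [neg_neg]⟩

end DouglasRachfordIteration

theorem stmt_14_general {H : Type*} [NormedAddCommGroup H] [InnerProductSpace ℝ H]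
    [CompleteSpace H] (lam : ℝ) (hlam : 0 < lam)
    (A B : H → Set H) (hA : IsMaximalMonotoneOp A) (hB : IsMaximalMonotoneOp B)
    (JA JB : H → H)
    (hJA : ∀ x : H, ∃ w ∈ A (JA x), x - JA x = lam • w)
    (hJB : ∀ x : H, ∃ w ∈ B (JB x), x - JB x = lam • w)
    (hzero : ∃ z : H, ∃ w ∈ A z, -w ∈ B z)
    (α β : ℕ → H) (herr : Summable (fun k => ‖α k‖ + ‖β k‖))
    (x : ℕ → H)
    (hxrec : ∀ k, x (k + 1) =
      x k + JA ((2 : ℝ) • (JB (x k) + β k) - x k) + α k - (JB (x k) + β k)) :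
    ∃ xhat phat : H,
      (∀ w : H, Tendsto (fun k => ⟪x k, w⟫) atTop (𝓝 ⟪xhat, w⟫)) ∧
      (∀ w : H, Tendsto (fun k => ⟪JB (x k), w⟫) atTop (𝓝 ⟪phat, w⟫)) ∧
      phat = JB xhat ∧ (∃ w ∈ A phat, -w ∈ B phat) := by
  obtain ⟨z, w, hwA, hwB⟩ := hzero
  set T := douglasRachford JA JB
  have hFA := IsResolvent.firmlyNonexpansive hJA hlam.le hA.1
  have hT : FirmlyNonexpansive T :=
    hFA.douglasRachford (IsResolvent.firmlyNonexpansive hJB hlam.le hB.1)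
  have hfix := (isFixedPt_douglasRachford hlam.le hA.1 hB.1 hJA hJB hwA hwB).2
  have hx : ∀ k, ‖x (k + 1) - T (x k)‖ ≤ ‖α k‖ + 3 * ‖β k‖ := fun k =>
    hxrec k ▸ norm_sub_douglasRachford_le hFA JB _ _ _
  have hε : Summable fun k => ‖α k‖ + 3 * ‖β k‖ :=
    (herr.mul_left 3).of_nonneg_of_le (fun _ => by positivity)
      fun k => by linarith [norm_nonneg (α k)]
  obtain ⟨C, hC⟩ := exists_norm_le_of_isFixedPt hT.norm_sub_le hx hε hfix
  have hcluster := douglasRachford_weak_cluster hlam hA.1 hB.1 hJA hJB hxrec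
    herr.tendsto_atTop_zero (tendsto_norm_succ_sub hT hx hε hfix) hC
  obtain ⟨xh, -, hxh⟩ := exists_weakTendsto_of_opial (S := {y | IsFixedPt T y}) hC
    (fun y hy => exists_tendsto_norm_sub_of_isFixedPt hT.norm_sub_le hx hε hy)
    fun V hV _ ha => (hcluster V hV ha).1
  have hU := Ultrafilter.of_le (atTop : Filter ℕ)
  exact ⟨xh, JB xh, hxh,
    weakTendsto_iff_ultrafilter.2 fun V hV => (hcluster V hV (hxh.mono hV)).2.1, rfl,
    (hcluster _ hU (hxh.mono hU)).2.2⟩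

/-- inexact Douglas–Rachford splitting; Svaiter: Let `A, B` be
maximal monotone operators on a real Hilbert space `H` with resolvents
`J_{λA}, J_{λB}` (`λ > 0`), suppose `0 ∈ A(z) + B(z)` for some `z`, and let
`(α_k), (β_k)` be error sequences with `∑ₖ (‖α_k‖ + ‖β_k‖) < ∞`. Then the iterates
`x_{k+1} = x_k + J_{λA}(2(J_{λB}(x_k) + β_k) - x_k) + α_k - (J_{λB}(x_k) + β_k)`
converge weakly to some `x̂`, `p_k := J_{λB}(x_k)` converges weakly to some `p̂`,
and `p̂ = J_{λB}(x̂)` with `0 ∈ A(p̂) + B(p̂)`. -/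
theorem stmt_14 {H : Type*} [NormedAddCommGroup H] [InnerProductSpace ℝ H]
    [CompleteSpace H] (lam : ℝ) (hlam : 0 < lam)
    (A B : H → Set H) (hA : IsMaximalMonotoneOp A) (hB : IsMaximalMonotoneOp B)
    (JA JB : H → H)
    (hJA : ∀ x : H, ∃ w ∈ A (JA x), x - JA x = lam • w)
    (hJB : ∀ x : H, ∃ w ∈ B (JB x), x - JB x = lam • w)
    (hzero : ∃ z : H, ∃ w ∈ A z, -w ∈ B z)
    (α β : ℕ → H) (herr : Summable (fun k => ‖α k‖ + ‖β k‖))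
    (x₀ : H) (x : ℕ → H) (hx0 : x 0 = x₀)
    (hxrec : ∀ k, x (k + 1) =
      x k + JA ((2 : ℝ) • (JB (x k) + β k) - x k) + α k - (JB (x k) + β k)) :
    ∃ xhat phat : H,
      (∀ w : H, Tendsto (fun k => ⟪x k, w⟫) atTop (𝓝 ⟪xhat, w⟫)) ∧
      (∀ w : H, Tendsto (fun k => ⟪JB (x k), w⟫) atTop (𝓝 ⟪phat, w⟫)) ∧
      phat = JB xhat ∧ (∃ w ∈ A phat, -w ∈ B phat) :=
  stmt_14_general lam hlam A B hA hB JA JB hJA hJB hzero α β herr x hxrec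
end
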